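/- arXiv:1601.05244 — 2 statements merged into one kernel-verified Lean document; each statement's English description precedes it below -/
import Mathlib

section
/- Let 0 < r < ∞, s > 1/r, ε > 0, and set s' = s − 1/r − ε, assuming s' ≥ 0. Then there is a constant C (depending on n, s, s', r) such that for every family of nonnegative reals a : ℤ^n → ℝ≥0, (∑_{k_n ∈ ℤ} sup_{k̄ ∈ ℤ^{n-1}} ⟨k̄⟩^{s'r} a(k̄,k_n)^r)^{1/r} ≤ C · sup_{k ∈ ℤ^n} ⟨k⟩^s a(k). -/
open scoped ENNReal NNReal BigOperators

/-- Japanese bracket of a lattice point. -/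
noncomputable def jb {m : ℕ} (k : Fin m → ℤ) : ℝ := Real.sqrt (1 + ∑ i, ((k i : ℝ))^2)

/-- Japanese bracket of a lattice point `(k̄, kₙ) ∈ ℤ^{m} × ℤ`. -/
noncomputable def jb2 {m : ℕ} (kb : Fin m → ℤ) (kn : ℤ) : ℝ :=
  Real.sqrt (1 + ∑ i, ((kb i : ℝ))^2 + (kn : ℝ)^2)

lemma jb_nonneg {m : ℕ} (k : Fin m → ℤ) : 0 ≤ jb k := Real.sqrt_nonneg _

lemma key_real {m : ℕ} (kb : Fin m → ℤ) (kn : ℤ) {s s' : ℝ} (hs'0 : 0 ≤ s') (hss : s' ≤ s) :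
    jb kb ^ s' ≤ (1 + (kn:ℝ)^2) ^ ((s' - s)/2) * jb2 kb kn ^ s := by
  set X : ℝ := 1 + ∑ i, ((kb i : ℝ))^2 with hX
  set Y : ℝ := (kn : ℝ)^2 with hY
  have hX1 : (1:ℝ) ≤ X := by
    have : (0:ℝ) ≤ ∑ i, ((kb i : ℝ))^2 := Finset.sum_nonneg fun i _ => sq_nonneg _
    simp [hX]; linarith
  have hY0 : (0:ℝ) ≤ Y := sq_nonneg _
  have hXY : (0:ℝ) < X + Y := by linarith
  have e1 : jb kb ^ s' = X ^ (s'/2) := by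
    rw [jb, Real.rpow_div_two_eq_sqrt s' (by linarith)]
  have e2 : jb2 kb kn ^ s = (X + Y) ^ (s/2) := by
    rw [jb2, Real.rpow_div_two_eq_sqrt s (by linarith)]
  rw [e1, e2]
  calc X ^ (s'/2) ≤ (X + Y) ^ (s'/2) :=
        Real.rpow_le_rpow (by linarith) (by linarith) (by linarith)
    _ = (X + Y) ^ ((s' - s)/2) * (X + Y) ^ (s/2) := by
        rw [← Real.rpow_add hXY]; congr 1; ring
    _ ≤ (1 + Y) ^ ((s' - s)/2) * (X + Y) ^ (s/2) := by
        apply mul_le_mul_of_nonneg_right _ (Real.rpow_nonneg hXY.le _)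
        exact Real.rpow_le_rpow_of_nonpos (by linarith) (by linarith) (by linarith)

theorem stmt_2 (n : ℕ) (hn : 2 ≤ n) (r s ε s' : ℝ) (hr : 0 < r) (hs : 1/r < s)
    (hε : 0 < ε) (hs' : s' = s - 1/r - ε) (hs'0 : 0 ≤ s') :
    ∃ C : ℝ≥0, ∀ a : (Fin (n-1) → ℤ) → ℤ → ℝ≥0,
      (∑' kn : ℤ, ⨆ kb : Fin (n-1) → ℤ,
          ENNReal.ofReal (jb kb ^ (s' * r)) * (a kb kn : ℝ≥0∞) ^ r) ^ (1/r) ≤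
        (C : ℝ≥0∞) * ⨆ kb : Fin (n-1) → ℤ, ⨆ kn : ℤ,
          ENNReal.ofReal (jb2 kb kn ^ s) * (a kb kn : ℝ≥0∞) := by
  have hrinv : (0:ℝ) < 1/r := by positivity
  have hss : s' ≤ s := by rw [hs']; linarith
  set p : ℝ := (s' - s) * r / 2 with hp
  have h2p : (s' - s) * r = -(1 + ε * r) := by
    rw [hs']; field_simp; ring
  have hple0 : p ≤ 0 := by
    rw [hp]; nlinarith [mul_pos hε hr]
  have hsum : Summable (fun kn : ℤ => (1 + (kn:ℝ)^2) ^ p) := by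
    rw [← Finset.summable_compl_iff ({0} : Finset ℤ)]
    have hb : 1 < 1 + ε * r := by nlinarith
    refine Summable.of_nonneg_of_le (fun i => by positivity) ?_
      ((Real.summable_abs_int_rpow hb).subtype _)
    rintro ⟨kn, hkn⟩
    simp only [Finset.mem_coe, Finset.mem_singleton] at hkn
    have h1 : (1:ℝ) ≤ |(kn:ℝ)| := by
      have := Int.one_le_abs hkn
      calc (1:ℝ) ≤ (|kn| : ℤ) := by exact_mod_cast this
        _ = |(kn:ℝ)| := by push_cast; ring
    have h2 : (1:ℝ) ≤ (kn:ℝ)^2 := by rw [← sq_abs]; nlinarith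
    calc (1 + (kn:ℝ)^2) ^ p ≤ ((kn:ℝ)^2) ^ p :=
          Real.rpow_le_rpow_of_nonpos (by linarith) (by linarith) hple0
      _ = |(kn:ℝ)| ^ (-(1 + ε * r)) := by
          rw [← sq_abs, ← Real.rpow_natCast |(kn:ℝ)| 2, ← Real.rpow_mul (abs_nonneg _)]
          congr 1
          rw [hp]; push_cast; linarith [h2p]
  set T : ℝ≥0∞ := ∑' kn : ℤ, ENNReal.ofReal ((1 + (kn:ℝ)^2) ^ p) with hT
  have hTtop : T ≠ ⊤ := by
    rw [hT, ← ENNReal.ofReal_tsum_of_nonneg (fun _ => by positivity) hsum]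
    exact ENNReal.ofReal_ne_top
  refine ⟨(T ^ (1/r)).toNNReal, fun a => ?_⟩
  set M : ℝ≥0∞ := ⨆ kb : Fin (n-1) → ℤ, ⨆ kn : ℤ,
      ENNReal.ofReal (jb2 kb kn ^ s) * (a kb kn : ℝ≥0∞) with hM
  have hC : (((T ^ (1/r)).toNNReal : ℝ≥0) : ℝ≥0∞) = T ^ (1/r) :=
    ENNReal.coe_toNNReal (ENNReal.rpow_ne_top_of_nonneg hrinv.le hTtop)
  rw [hC]
  have key : ∀ kn : ℤ,
      (⨆ kb : Fin (n-1) → ℤ, ENNReal.ofReal (jb kb ^ (s' * r)) * (a kb kn : ℝ≥0∞) ^ r) ≤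
        ENNReal.ofReal ((1 + (kn:ℝ)^2) ^ p) * M ^ r := by
    intro kn
    refine iSup_le fun kb => ?_
    have h1 : ENNReal.ofReal (jb kb ^ s') * (a kb kn : ℝ≥0∞) ≤
        ENNReal.ofReal ((1 + (kn:ℝ)^2) ^ ((s' - s)/2)) * M := by
      calc ENNReal.ofReal (jb kb ^ s') * (a kb kn : ℝ≥0∞)
          ≤ ENNReal.ofReal ((1 + (kn:ℝ)^2) ^ ((s' - s)/2) * jb2 kb kn ^ s) * (a kb kn : ℝ≥0∞) :=
            mul_le_mul_left (ENNReal.ofReal_le_ofReal (key_real kb kn hs'0 hss)) _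
        _ = ENNReal.ofReal ((1 + (kn:ℝ)^2) ^ ((s' - s)/2)) *
              (ENNReal.ofReal (jb2 kb kn ^ s) * (a kb kn : ℝ≥0∞)) := by
            rw [ENNReal.ofReal_mul (Real.rpow_nonneg (by positivity) _), mul_assoc]
        _ ≤ ENNReal.ofReal ((1 + (kn:ℝ)^2) ^ ((s' - s)/2)) * M := by
            refine mul_le_mul_right ?_ _
            rw [hM]
            exact le_iSup₂ (f := fun (kb : Fin (n-1) → ℤ) (kn : ℤ) =>
              ENNReal.ofReal (jb2 kb kn ^ s) * (a kb kn : ℝ≥0∞)) kb kn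
    have h2 := ENNReal.rpow_le_rpow h1 hr.le
    calc ENNReal.ofReal (jb kb ^ (s' * r)) * (a kb kn : ℝ≥0∞) ^ r
        = (ENNReal.ofReal (jb kb ^ s') * (a kb kn : ℝ≥0∞)) ^ r := by
          rw [ENNReal.mul_rpow_of_nonneg _ _ hr.le,
            ENNReal.ofReal_rpow_of_nonneg (Real.rpow_nonneg (jb_nonneg kb) _) hr.le,
            ← Real.rpow_mul (jb_nonneg kb)]
      _ ≤ (ENNReal.ofReal ((1 + (kn:ℝ)^2) ^ ((s' - s)/2)) * M) ^ r := h2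
      _ = ENNReal.ofReal ((1 + (kn:ℝ)^2) ^ p) * M ^ r := by
          rw [ENNReal.mul_rpow_of_nonneg _ _ hr.le,
            ENNReal.ofReal_rpow_of_nonneg (Real.rpow_nonneg (by positivity) _) hr.le,
            ← Real.rpow_mul (by positivity : (0:ℝ) ≤ 1 + (kn:ℝ)^2)]
          congr 2
          rw [hp]; ring
  calc (∑' kn : ℤ, ⨆ kb : Fin (n-1) → ℤ,
          ENNReal.ofReal (jb kb ^ (s' * r)) * (a kb kn : ℝ≥0∞) ^ r) ^ (1/r)
      ≤ (∑' kn : ℤ, ENNReal.ofReal ((1 + (kn:ℝ)^2) ^ p) * M ^ r) ^ (1/r) :=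
        ENNReal.rpow_le_rpow (ENNReal.tsum_le_tsum key) hrinv.le
    _ = (T * M ^ r) ^ (1/r) := by rw [ENNReal.tsum_mul_right]
    _ = T ^ (1/r) * M := by
        rw [ENNReal.mul_rpow_of_nonneg _ _ hrinv.le, ← ENNReal.rpow_mul, mul_one_div,
          div_self hr.ne', ENNReal.rpow_one]
end

section
/- Let 0 < r < q < ∞, s > 1/r − 1/q, ε > 0, set s' = s − (1/r − 1/q) − ε and assume s' ≥ 0. Then there is a constant C such that for all nonnegative a : ℤ^n → ℝ≥0: (∑_{k_n ∈ ℤ} (∑_{k̄ ∈ ℤ^{n-1}} ⟨k̄⟩^{s'q} a(k̄,k_n)^q)^{r/q})^{1/r} ≤ C (∑_{k ∈ ℤ^n} ⟨k⟩^{sq} a(k)^q)^{1/q}. -/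
open scoped ENNReal NNReal BigOperators

/-!
Put `β = 1/r - 1/q + ε = s - s'`. Since `⟨k̄⟩, ⟨kₙ⟩ ≤ ⟨k⟩`, the inner sum at height `kₙ` is at most
`⟨kₙ⟩^{-βq} Uₖₙ`, where `Uₖₙ = ∑_{k̄} ⟨k⟩^{sq} a(k)^q`, so `∑ₖₙ Uₖₙ` is the right-hand side to the
power `q`. Hölder's inequality in
`ℓ^{q/r}` then bounds `∑ₖₙ (⟨kₙ⟩^{-βq} Uₖₙ)^{r/q}` by `(∑ₖₙ Uₖₙ)^{r/q}` times a power of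
`∑ₖₙ ⟨kₙ⟩^{-βqr/(q-r)}`, which converges because `βqr/(q-r) = 1 + εqr/(q-r) > 1`.
-/

namespace ENNReal

theorem tsum_mul_le_Lp_mul_Lq {ι : Type*} (f g : ι → ℝ≥0∞) {p q : ℝ}
    (hpq : p.HolderConjugate q) :
    ∑' i, f i * g i ≤ (∑' i, f i ^ p) ^ (1 / p) * (∑' i, g i ^ q) ^ (1 / q) := by
  let : MeasurableSpace ι := ⊤
  simpa only [MeasureTheory.lintegral_count' measurable_from_top, Pi.mul_apply] using
    lintegral_mul_le_Lp_mul_Lq MeasureTheory.Measure.count hpq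
      measurable_from_top.aemeasurable measurable_from_top.aemeasurable

theorem tsum_mul_rpow_div_rpow_le {ι : Type*} (w g : ι → ℝ≥0∞) {r q : ℝ}
    (hr : 0 < r) (hrq : r < q) :
    (∑' i, (w i * g i) ^ (r / q)) ^ (1 / r) ≤
      (∑' i, w i ^ (r / (q - r))) ^ ((q - r) / (q * r)) * (∑' i, g i) ^ (1 / q) := by
  have hq : 0 < q := hr.trans hrq
  have hqr : 0 < q - r := sub_pos.2 hrq
  have hconj : (q / (q - r)).HolderConjugate (q / r) :=
    (Real.holderConjugate_iff).2 ⟨(one_lt_div hqr).2 (by linarith), by field_simp; ring⟩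
  have holder := tsum_mul_le_Lp_mul_Lq (fun i => w i ^ (r / q)) (fun i => g i ^ (r / q)) hconj
  simp only [← rpow_mul] at holder
  have e₁ : r / q * (q / (q - r)) = r / (q - r) := by field_simp
  have e₂ : r / q * (q / r) = 1 := by field_simp
  rw [e₁, e₂, one_div_div, one_div_div] at holder
  simp only [rpow_one] at holder
  calc (∑' i, (w i * g i) ^ (r / q)) ^ (1 / r)
      = (∑' i, w i ^ (r / q) * g i ^ (r / q)) ^ (1 / r) := by
        simp only [mul_rpow_of_nonneg _ _ (div_pos hr hq).le]
    _ ≤ ((∑' i, w i ^ (r / (q - r))) ^ ((q - r) / q) * (∑' i, g i) ^ (r / q)) ^ (1 / r) :=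
        rpow_le_rpow holder (by positivity)
    _ = (∑' i, w i ^ (r / (q - r))) ^ ((q - r) / (q * r)) * (∑' i, g i) ^ (1 / q) := by
        rw [mul_rpow_of_nonneg _ _ (by positivity), ← rpow_mul, ← rpow_mul]
        congr 2 <;> field_simp

end ENNReal

theorem summable_sqrt_one_add_sq_rpow_neg {t : ℝ} (ht : 1 < t) :
    Summable fun k : ℤ => √(1 + (k : ℝ) ^ 2) ^ (-t) := by
  refine (Real.summable_abs_int_rpow ht).of_norm_bounded_eventually ?_
  filter_upwards [(Set.finite_singleton (0 : ℤ)).compl_mem_cofinite] with k hk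
  have hk : 0 < |(k : ℝ)| := by simpa using hk
  rw [Real.norm_of_nonneg (by positivity)]
  exact Real.rpow_le_rpow_of_nonpos hk (Real.abs_le_sqrt (by linarith)) (by linarith)

theorem Real.rpow_le_rpow_neg_mul_rpow_add {x y z a b : ℝ} (hx : 0 ≤ x) (hy : 0 < y)
    (hxz : x ≤ z) (hyz : y ≤ z) (ha : 0 ≤ a) (hb : 0 ≤ b) :
    x ^ a ≤ y ^ (-b) * z ^ (a + b) := by
  have hz : 0 < z := hy.trans_le hyz
  calc x ^ a ≤ z ^ a := Real.rpow_le_rpow hx hxz ha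
    _ = y ^ (-b) * (y ^ b * z ^ a) := by
        rw [← mul_assoc, Real.rpow_neg hy.le, inv_mul_cancel₀ (by positivity), one_mul]
    _ ≤ y ^ (-b) * (z ^ b * z ^ a) := by gcongr
    _ = y ^ (-b) * z ^ (a + b) := by rw [← Real.rpow_add hz, add_comm]

theorem jb_le_jb2 {m : ℕ} (kb : Fin m → ℤ) (kn : ℤ) : jb kb ≤ jb2 kb kn :=
  Real.sqrt_le_sqrt (by nlinarith)

theorem sqrt_one_add_sq_le_jb2 {m : ℕ} (kb : Fin m → ℤ) (kn : ℤ) :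
    √(1 + (kn : ℝ) ^ 2) ≤ jb2 kb kn :=
  Real.sqrt_le_sqrt (by linarith [show (0 : ℝ) ≤ ∑ i, ((kb i : ℝ)) ^ 2 by positivity])

theorem jb_rpow_le {m : ℕ} (kb : Fin m → ℤ) (kn : ℤ) {a b : ℝ} (ha : 0 ≤ a) (hb : 0 ≤ b) :
    jb kb ^ a ≤ √(1 + (kn : ℝ) ^ 2) ^ (-b) * jb2 kb kn ^ (a + b) :=
  Real.rpow_le_rpow_neg_mul_rpow_add (Real.sqrt_nonneg _) (by positivity)
    (jb_le_jb2 kb kn) (sqrt_one_add_sq_le_jb2 kb kn) ha hb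

theorem stmt_4_general (n : ℕ) (r q s ε s' : ℝ) (hr : 0 < r) (hrq : r < q)
    (hε : 0 < ε)
    (hs' : s' = s - (1/r - 1/q) - ε) (hs'0 : 0 ≤ s') :
    ∃ C : ℝ≥0, ∀ a : (Fin (n-1) → ℤ) → ℤ → ℝ≥0,
      (∑' kn : ℤ, (∑' kb : Fin (n-1) → ℤ,
          ENNReal.ofReal (jb kb ^ (s' * q)) * (a kb kn : ℝ≥0∞) ^ q) ^ (r/q)) ^ (1/r) ≤
        (C : ℝ≥0∞) * (∑' kb : Fin (n-1) → ℤ, ∑' kn : ℤ,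
          ENNReal.ofReal (jb2 kb kn ^ (s * q)) * (a kb kn : ℝ≥0∞) ^ q) ^ (1/q) := by
  have hq : 0 < q := hr.trans hrq
  have hqr : 0 < q - r := sub_pos.2 hrq
  set β := 1/r - 1/q + ε
  have hβ : 0 < β := by have := one_div_lt_one_div_of_lt hr hrq; linarith
  set w : ℤ → ℝ≥0∞ := fun kn => ENNReal.ofReal (√(1 + (kn : ℝ) ^ 2) ^ (-(β * q)))
  have hw : ∑' kn, w kn ^ (r / (q - r)) ≠ ⊤ := by
    have hexp : 1 < β * q * (r / (q - r)) := by
      have : β * q * (r / (q - r)) = 1 + ε * q * r / (q - r) := by simp only [β]; field_simp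
      rw [this]; linarith [show 0 < ε * q * r / (q - r) by positivity]
    have hpow : ∀ kn, w kn ^ (r / (q - r)) =
        ENNReal.ofReal (√(1 + (kn : ℝ) ^ 2) ^ (-(β * q * (r / (q - r))))) := fun kn => by
      rw [ENNReal.ofReal_rpow_of_nonneg (by positivity) (div_pos hr hqr).le,
        ← Real.rpow_mul (Real.sqrt_nonneg _), neg_mul]
    rw [tsum_congr hpow, ← ENNReal.ofReal_tsum_of_nonneg (fun _ => by positivity)
      (summable_sqrt_one_add_sq_rpow_neg hexp)]
    exact ENNReal.ofReal_ne_top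
  refine ⟨((∑' kn, w kn ^ (r / (q - r))) ^ ((q - r) / (q * r))).toNNReal, fun a => ?_⟩
  rw [ENNReal.coe_toNNReal (ENNReal.rpow_ne_top_of_nonneg (by positivity) hw), ENNReal.tsum_comm]
  refine le_trans ?_ (ENNReal.tsum_mul_rpow_div_rpow_le w _ hr hrq)
  gcongr with kn
  rw [← ENNReal.tsum_mul_left]
  refine ENNReal.tsum_le_tsum fun kb => ?_
  rw [← mul_assoc, ← ENNReal.ofReal_mul (by positivity)]
  gcongr
  convert jb_rpow_le kb kn (by positivity : 0 ≤ s' * q) (by positivity : 0 ≤ β * q) using 3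
  rw [hs']; ring

theorem stmt_4 (n : ℕ) (hn : 2 ≤ n) (r q s ε s' : ℝ) (hr : 0 < r) (hrq : r < q)
    (hs : 1/r - 1/q < s) (hε : 0 < ε)
    (hs' : s' = s - (1/r - 1/q) - ε) (hs'0 : 0 ≤ s') :
    ∃ C : ℝ≥0, ∀ a : (Fin (n-1) → ℤ) → ℤ → ℝ≥0,
      (∑' kn : ℤ, (∑' kb : Fin (n-1) → ℤ,
          ENNReal.ofReal (jb kb ^ (s' * q)) * (a kb kn : ℝ≥0∞) ^ q) ^ (r/q)) ^ (1/r) ≤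
        (C : ℝ≥0∞) * (∑' kb : Fin (n-1) → ℤ, ∑' kn : ℤ,
          ENNReal.ofReal (jb2 kb kn ^ (s * q)) * (a kb kn : ℝ≥0∞) ^ q) ^ (1/q) :=
  stmt_4_general n r q s ε s' hr hrq hε hs' hs'0
end
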